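/- Let C = (1, c₂, ..., cₙ) with n ≥ 2 and suppose the subsystem C' = (1, c₂, ..., c_{n-1}) is canonical. Then C is canonical if and only if grd_C(m·c_{n-1}) ≤ m, where m = ⌈cₙ / c_{n-1}⌉. -/

import Mathlib

/-!
Write `d = c (n - 1)`, `N = c n`, `m * d = N + r₀` with `r₀ < d`, and `grd'` for greedy on the
subsystem. There greedy is optimal, hence subadditive, and `grd' (t + k * d) = grd' t + k`. Via
`grd (m * d) = grd' r₀ + 1`, the hypothesis reads `grd' r₀ < m`, and it propagates to
`grd' r < grd' (N + r)` for every `r`. So greedy on the full system never uses more coins than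
greedy on the subsystem, and induction on the value finishes: an optimal representation either
avoids `c n` (and is then bounded below by `grd'`) or contains it (and we peel it off).
-/

open Finset

/-- `x` is a representation of value `v` in the coin system `c 1, …, c n`. -/
def IsRepr (n : ℕ) (c : ℕ → ℕ) (v : ℕ) (x : ℕ → ℕ) : Prop :=
  ∑ i ∈ Finset.Icc 1 n, c i * x i = v

/-- Minimum number of coins over all representations of `v`. -/
noncomputable def opt (n : ℕ) (c : ℕ → ℕ) (v : ℕ) : ℕ :=
  sInf {k | ∃ x : ℕ → ℕ, IsRepr n c v x ∧ ∑ i ∈ Finset.Icc 1 n, x i = k}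

/-- Number of coins used by the greedy algorithm to pay `v`. -/
def grd (n : ℕ) (c : ℕ → ℕ) (v : ℕ) : ℕ :=
  if hv : v = 0 then 0
  else
    let m := ((Finset.Icc 1 n).filter (fun i => c i ≤ v)).sup c
    if hm : 0 < m then grd n c (v - m) + 1 else 0
termination_by v
decreasing_by omega

/-- The system is canonical: greedy is optimal for every positive value. -/
def Canonical (n : ℕ) (c : ℕ → ℕ) : Prop :=
  ∀ v, 0 < v → opt n c v = grd n c v

/-- `w` is a counterexample to the system. -/
def IsCex (n : ℕ) (c : ℕ → ℕ) (w : ℕ) : Prop :=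
  0 < w ∧ opt n c w < grd n c w

/-- `w` is the minimum counterexample to the system. -/
def MinCex (n : ℕ) (c : ℕ → ℕ) (w : ℕ) : Prop :=
  IsCex n c w ∧ ∀ u, IsCex n c u → w ≤ u

/-- A (currency) system: first coin is `1` and coins strictly increase. -/
def IsSystem (n : ℕ) (c : ℕ → ℕ) : Prop :=
  c 1 = 1 ∧ StrictMonoOn c (Set.Icc 1 n)

def largestCoin (n : ℕ) (c : ℕ → ℕ) (v : ℕ) : ℕ :=
  ((Icc 1 n).filter (fun i => c i ≤ v)).sup c

variable {n : ℕ} {c : ℕ → ℕ}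

lemma IsSystem.of_succ (hsys : IsSystem (n + 1) c) : IsSystem n c :=
  ⟨hsys.1, hsys.2.mono (Set.Icc_subset_Icc_right (Nat.le_succ n))⟩

lemma IsSystem.one_le (hsys : IsSystem n c) {i : ℕ} (hi : i ∈ Set.Icc 1 n) : 1 ≤ c i :=
  hsys.1 ▸ hsys.2.monotoneOn ⟨le_rfl, hi.1.trans hi.2⟩ hi hi.1

section Greedy

lemma grd_zero (n : ℕ) (c : ℕ → ℕ) : grd n c 0 = 0 := by
  rw [grd]; simp

lemma grd_eq_of_ne_zero {v : ℕ} (hv : v ≠ 0) :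
    grd n c v =
      if 0 < largestCoin n c v then grd n c (v - largestCoin n c v) + 1 else 0 := by
  rw [grd, dif_neg hv]
  rfl

lemma largestCoin_le (n : ℕ) (c : ℕ → ℕ) (v : ℕ) : largestCoin n c v ≤ v :=
  Finset.sup_le fun _ hi => (mem_filter.mp hi).2

lemma exists_largestCoin_eq (h1 : c 1 = 1) (hn : 1 ≤ n) {v : ℕ} (hv : 0 < v) :
    ∃ i ∈ Icc 1 n, largestCoin n c v = c i ∧ 0 < c i := by
  have h1mem : 1 ∈ (Icc 1 n).filter (fun i => c i ≤ v) := by simp [hn, h1]; omega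
  obtain ⟨i, hi, hie⟩ := exists_mem_eq_sup _ ⟨1, h1mem⟩ c
  have := le_sup (f := c) h1mem
  exact ⟨i, (mem_filter.mp hi).1, hie, by omega⟩

lemma grd_of_pos (h1 : c 1 = 1) (hn : 1 ≤ n) {v : ℕ} (hv : 0 < v) :
    grd n c v = grd n c (v - largestCoin n c v) + 1 := by
  obtain ⟨i, -, hie, hpos⟩ := exists_largestCoin_eq h1 hn hv
  rw [grd_eq_of_ne_zero hv.ne', if_pos (hie ▸ hpos)]

lemma largestCoin_succ_of_lt {v : ℕ} (hv : v < c (n + 1)) :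
    largestCoin (n + 1) c v = largestCoin n c v := by
  unfold largestCoin
  congr 1
  ext i
  simp only [mem_filter, mem_Icc]
  constructor
  · rintro ⟨⟨hi1, hin⟩, hiv⟩
    rcases hin.eq_or_lt with rfl | hin
    · omega
    · exact ⟨⟨hi1, by omega⟩, hiv⟩
  · rintro ⟨⟨hi1, hin⟩, hiv⟩
    exact ⟨⟨hi1, by omega⟩, hiv⟩

lemma grd_succ_of_lt {v : ℕ} (hv : v < c (n + 1)) : grd (n + 1) c v = grd n c v := by
  induction v using Nat.strong_induction_on with
  | _ v ih =>
    rcases Nat.eq_zero_or_pos v with rfl | hv0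
    · rw [grd_zero, grd_zero]
    rw [grd_eq_of_ne_zero hv0.ne', grd_eq_of_ne_zero hv0.ne', largestCoin_succ_of_lt hv]
    split_ifs with hpos
    · rw [ih _ (by omega) (by omega)]
    · rfl

lemma IsSystem.largestCoin_eq (hsys : IsSystem n c) (hn : 1 ≤ n) {v : ℕ} (hv : c n ≤ v) :
    largestCoin n c v = c n := by
  refine le_antisymm (Finset.sup_le fun i hi => ?_) (le_sup (by simp [hn, hv]))
  obtain ⟨hi1, hin⟩ := mem_Icc.mp (mem_filter.mp hi).1
  exact hsys.2.monotoneOn ⟨hi1, hin⟩ ⟨hn, le_rfl⟩ hin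

lemma IsSystem.grd_of_le (hsys : IsSystem n c) (hn : 1 ≤ n) {v : ℕ} (hv : c n ≤ v) :
    grd n c v = grd n c (v - c n) + 1 := by
  have hcn := hsys.one_le ⟨hn, le_rfl⟩
  rw [grd_of_pos hsys.1 hn (by omega), hsys.largestCoin_eq hn hv]

lemma IsSystem.grd_add_mul (hsys : IsSystem n c) (hn : 1 ≤ n) (t k : ℕ) :
    grd n c (t + k * c n) = grd n c t + k := by
  induction k with
  | zero => simp
  | succ k ih =>
    rw [hsys.grd_of_le hn (by nlinarith), show t + (k + 1) * c n - c n = t + k * c n by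
      rw [add_one_mul, ← add_assoc, Nat.add_sub_cancel], ih, add_assoc]

end Greedy

section Optimal

lemma IsRepr.opt_le {v : ℕ} {x : ℕ → ℕ} (hx : IsRepr n c v x) :
    opt n c v ≤ ∑ i ∈ Icc 1 n, x i :=
  Nat.sInf_le ⟨x, hx, rfl⟩

lemma IsRepr.add {a b : ℕ} {x y : ℕ → ℕ} (hx : IsRepr n c a x) (hy : IsRepr n c b y) :
    IsRepr n c (a + b) (x + y) := by
  simp only [IsRepr, Pi.add_apply, mul_add, sum_add_distrib, hx.symm, hy.symm]

lemma isRepr_single {i : ℕ} (hi : i ∈ Icc 1 n) (k : ℕ) :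
    IsRepr n c (k * c i) (Pi.single i k) := by
  simp [IsRepr, Pi.single_apply, hi, mul_comm]

lemma exists_isRepr_opt (h1 : c 1 = 1) (hn : 1 ≤ n) (v : ℕ) :
    ∃ x, IsRepr n c v x ∧ ∑ i ∈ Icc 1 n, x i = opt n c v := by
  have h1mem : (1 : ℕ) ∈ Icc 1 n := mem_Icc.mpr ⟨le_rfl, hn⟩
  have hx : IsRepr n c v (Pi.single 1 v) := by simpa [h1] using isRepr_single (c := c) h1mem v
  exact Nat.sInf_mem (s := {k | ∃ x, IsRepr n c v x ∧ ∑ i ∈ Icc 1 n, x i = k})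
    ⟨v, _, hx, by simp [Pi.single_apply, h1mem]⟩

lemma opt_zero (n : ℕ) (c : ℕ → ℕ) : opt n c 0 = 0 :=
  Nat.le_zero.mp <| (IsRepr.opt_le (x := 0) (by simp [IsRepr])).trans (by simp)

lemma opt_mul_le {i : ℕ} (hi : i ∈ Icc 1 n) (k : ℕ) : opt n c (k * c i) ≤ k :=
  (isRepr_single hi k).opt_le.trans (by simp [Pi.single_apply, hi])

lemma opt_add_le (h1 : c 1 = 1) (hn : 1 ≤ n) (a b : ℕ) :
    opt n c (a + b) ≤ opt n c a + opt n c b := by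
  obtain ⟨x, hx, hxa⟩ := exists_isRepr_opt h1 hn a
  obtain ⟨y, hy, hyb⟩ := exists_isRepr_opt h1 hn b
  calc opt n c (a + b) ≤ ∑ i ∈ Icc 1 n, (x + y) i := (hx.add hy).opt_le
    _ = opt n c a + opt n c b := by simp only [Pi.add_apply, sum_add_distrib, hxa, hyb]

lemma opt_le_grd (h1 : c 1 = 1) (hn : 1 ≤ n) (v : ℕ) : opt n c v ≤ grd n c v := by
  induction v using Nat.strong_induction_on with
  | _ v ih =>
    rcases Nat.eq_zero_or_pos v with rfl | hv
    · rw [opt_zero, grd_zero]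
    obtain ⟨i, hi, hie, hpos⟩ := exists_largestCoin_eq h1 hn hv
    have hiv : c i ≤ v := hie ▸ largestCoin_le n c v
    rw [grd_of_pos h1 hn hv, hie]
    calc opt n c v = opt n c (v - c i + 1 * c i) := by rw [one_mul, Nat.sub_add_cancel hiv]
      _ ≤ opt n c (v - c i) + opt n c (1 * c i) := opt_add_le h1 hn _ _
      _ ≤ opt n c (v - c i) + 1 := by gcongr; exact opt_mul_le hi 1
      _ ≤ grd n c (v - c i) + 1 := by gcongr; exact ih _ (by omega)

lemma sum_Icc_update_succ (f : ℕ → ℕ → ℕ) (x : ℕ → ℕ) (a : ℕ) :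
    ∑ i ∈ Icc 1 (n + 1), f i (Function.update x (n + 1) a i) =
      ∑ i ∈ Icc 1 n, f i (x i) + f (n + 1) a := by
  rw [sum_Icc_succ_top (by omega), Function.update_self]
  congr 1
  refine sum_congr rfl fun i hi => ?_
  rw [Function.update_of_ne (by simp at hi; omega)]

lemma opt_succ_le (h1 : c 1 = 1) (hn : 1 ≤ n) (v : ℕ) : opt (n + 1) c v ≤ opt n c v := by
  obtain ⟨x, hx, hxv⟩ := exists_isRepr_opt h1 hn v
  have hx' : IsRepr (n + 1) c v (Function.update x (n + 1) 0) := by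
    rw [IsRepr, sum_Icc_update_succ (fun i y => c i * y), mul_zero, add_zero, hx]
  simpa [sum_Icc_update_succ (fun _ y => y), hxv] using hx'.opt_le

/-- An optimal representation either avoids the top coin or contains it. -/
lemma opt_le_opt_succ_or_opt_sub_lt (h1 : c 1 = 1) (hn : 1 ≤ n) (v : ℕ) :
    opt n c v ≤ opt (n + 1) c v ∨
      c (n + 1) ≤ v ∧ opt (n + 1) c (v - c (n + 1)) < opt (n + 1) c v := by
  obtain ⟨x, hx, hxv⟩ := exists_isRepr_opt h1 (n := n + 1) (by omega) v
  rw [IsRepr, sum_Icc_succ_top (by omega)] at hx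
  rw [sum_Icc_succ_top (by omega)] at hxv
  rcases hk : x (n + 1) with _ | k
  · left
    rw [hk] at hx hxv
    exact (show IsRepr n c v x by simpa [IsRepr] using hx).opt_le.trans (by simp [← hxv])
  · right
    rw [hk] at hx hxv
    refine ⟨by rw [← hx, mul_add_one]; omega, ?_⟩
    have hy : IsRepr (n + 1) c (v - c (n + 1)) (Function.update x (n + 1) k) := by
      rw [IsRepr, sum_Icc_update_succ (fun i y => c i * y), ← hx, mul_add_one]
      omega
    have := hy.opt_le
    rw [sum_Icc_update_succ (fun _ y => y)] at this
    omega

end Optimal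

lemma ceil_div_mul_mem_Ico (N : ℕ) {d : ℕ} (hd : 0 < d) :
    (N + d - 1) / d * d ∈ Set.Ico N (N + d) := by
  have := Nat.div_mul_le_self (N + d - 1) d
  have := Nat.lt_div_mul_add (a := N + d - 1) hd
  constructor <;> omega

section Canonical

lemma Canonical.opt_eq_grd (hcan : Canonical n c) (v : ℕ) : opt n c v = grd n c v := by
  rcases Nat.eq_zero_or_pos v with rfl | hv
  · rw [opt_zero, grd_zero]
  · exact hcan v hv

lemma Canonical.grd_add_le (hcan : Canonical n c) (h1 : c 1 = 1) (hn : 1 ≤ n) (a b : ℕ) :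
    grd n c (a + b) ≤ grd n c a + grd n c b := by
  simpa only [hcan.opt_eq_grd] using opt_add_le h1 hn a b

/-- Adding the top coin `c n` raises both sides by one; then `r + c n` is paid through `r₀`,
while `N + r + c n = (r + c n - r₀) + m * c n`. -/
lemma Canonical.grd_lt_grd_add (hcan : Canonical n c) (hsys : IsSystem n c) (hn : 1 ≤ n)
    {N r₀ m : ℕ} (hr₀ : r₀ < c n) (hN : N + r₀ = m * c n) (hgrd : grd n c r₀ < m)
    (r : ℕ) :
    grd n c r < grd n c (N + r) := by
  have hsplit : grd n c (r + 1 * c n) ≤ grd n c r₀ + grd n c (r + c n - r₀) := by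
    rw [show r + 1 * c n = r₀ + (r + c n - r₀) by omega]
    exact hcan.grd_add_le hsys.1 hn _ _
  have htop : grd n c (N + r + 1 * c n) = grd n c (r + c n - r₀ + m * c n) := by
    congr 1
    rw [← hN]
    omega
  rw [hsys.grd_add_mul hn] at hsplit
  rw [hsys.grd_add_mul hn, hsys.grd_add_mul hn] at htop
  omega

lemma IsSystem.grd_succ_le (hsys : IsSystem (n + 1) c) (hn : 1 ≤ n)
    (hgap : ∀ r, grd n c r < grd n c (c (n + 1) + r)) (v : ℕ) :
    grd (n + 1) c v ≤ grd n c v := by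
  induction v using Nat.strong_induction_on with
  | _ v ih =>
    rcases lt_or_ge v (c (n + 1)) with hv | hv
    · exact (grd_succ_of_lt hv).le
    obtain ⟨r, rfl⟩ := Nat.exists_eq_add_of_le hv
    have hN := hsys.one_le ⟨by omega, le_rfl⟩
    rw [hsys.grd_of_le (by omega) hv, Nat.add_sub_cancel_left]
    exact (ih r (by omega)).trans_lt (hgap r)

lemma IsSystem.canonical_succ (hsys : IsSystem (n + 1) c) (hn : 1 ≤ n) (hcan : Canonical n c)
    (hle : ∀ v, grd (n + 1) c v ≤ grd n c v) : Canonical (n + 1) c := by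
  suffices h : ∀ v, grd (n + 1) c v ≤ opt (n + 1) c v from
    fun v _ => le_antisymm (opt_le_grd hsys.1 (by omega) v) (h v)
  intro v
  induction v using Nat.strong_induction_on with
  | _ v ih =>
    rcases opt_le_opt_succ_or_opt_sub_lt hsys.1 hn v with hopt | ⟨hv, hopt⟩
    · calc grd (n + 1) c v ≤ grd n c v := hle v
        _ = opt n c v := (hcan.opt_eq_grd v).symm
        _ ≤ opt (n + 1) c v := hopt
    · have hN := hsys.one_le ⟨by omega, le_rfl⟩
      rw [hsys.grd_of_le (by omega) hv]
      exact Nat.succ_le_of_lt ((ih _ (by omega)).trans_lt hopt)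

end Canonical

/-- One-point theorem (grd form). -/
theorem one_point_theorem_grd (n : ℕ) (c : ℕ → ℕ) (hn : 2 ≤ n)
    (hsys : IsSystem n c) (hsub : Canonical (n - 1) c)
    (m : ℕ) (hm : m = (c n + c (n - 1) - 1) / c (n - 1)) :
    Canonical n c ↔ grd n c (m * c (n - 1)) ≤ m := by
  obtain ⟨k, rfl⟩ : ∃ k, n = k + 1 := ⟨n - 1, by omega⟩
  rw [Nat.add_sub_cancel] at hsub hm ⊢
  have hk : 1 ≤ k := by omega
  have hck : c k < c (k + 1) := hsys.2 ⟨hk, by omega⟩ ⟨by omega, le_rfl⟩ (by omega)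
  obtain ⟨hNle, hlt⟩ : c (k + 1) ≤ m * c k ∧ m * c k < c (k + 1) + c k :=
    hm ▸ ceil_div_mul_mem_Ico (c (k + 1)) (hsys.of_succ.one_le ⟨hk, le_rfl⟩)
  constructor
  · intro hcan
    rw [← hcan.opt_eq_grd]
    exact opt_mul_le (mem_Icc.mpr ⟨hk, by omega⟩) m
  · intro hgrd
    obtain ⟨r₀, hr₀⟩ := Nat.exists_eq_add_of_le hNle
    rw [hr₀, hsys.grd_of_le (by omega) (by omega), Nat.add_sub_cancel_left,
      grd_succ_of_lt (by omega)] at hgrd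
    exact hsys.canonical_succ hk hsub <| hsys.grd_succ_le hk <|
      hsub.grd_lt_grd_add hsys.of_succ hk (by omega) hr₀.symm (by omega)
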